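/- arXiv:1709.00081 — 2 statements merged into one kernel-verified Lean document; each statement's English description precedes it below -/
import Mathlib

section
/- Fix q ≥ 1 and γ ∈ ℝ^q. On a probability space for sample a, let z^a = (z^a_1, …, z^a_q) be square-integrable real random variables and v^a a square-integrable real random variable with the random vector z^a independent of v^a; define x^a = Σ_k γ_k z^a_k + v^a. On a probability space for sample b, let z^b = (z^b_1, …, z^b_q) be square-integrable, u^b, v^b square-integrable, with the random vector z^b independent of the pair (u^b, v^b); for β^b ∈ ℝ define x^b = Σ_k γ_k z^b_k + v^b and y^b = β^b x^b + u^b. Then for every j: Cov(z^a_j, x^a) = Σ_k γ_k Cov(z^a_j, z^a_k) and Cov(z^b_j, y^b) = β^b Σ_k γ_k Cov(z^b_j, z^b_k). Consequently, if the covariance matrices Σ^a = (Cov(z^a_j, z^a_k))_{j,k} and Σ^b = (Cov(z^b_j, z^b_k))_{j,k} are invertible, then (Σ^b)^{-1}(Cov(z^b_j, y^b))_j = β^b γ and (Σ^a)^{-1}(Cov(z^a_j, x^a))_j = γ, so that the population moment function m(β) = (Σ^b)^{-1}(Cov(z^b_j, y^b))_j − (Σ^a)^{-1}(Cov(z^a_j,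 x^a))_j · β equals γ(β^b − β), which (when γ ≠ 0) vanishes if and only if β = β^b. -/
open Matrix MeasureTheory ProbabilityTheory

/-- Covariance of two real random variables. -/
noncomputable def cov {Ωs : Type*} [MeasurableSpace Ωs] (μ : Measure Ωs)
    (X Y : Ωs → ℝ) : ℝ :=
  ∫ ω, (X ω - ∫ ω', X ω' ∂μ) * (Y ω - ∫ ω', Y ω' ∂μ) ∂μ

/-!
Covariance with an instrument is linear in the second argument and kills every summand
independent of the instrument. Hence `Cov(z_j, x) = (Σ γ)_j` and `Cov(z_j, y) = β^b (Σ γ)_j` in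
each sample separately, whatever the instrument covariance `Σ` of that sample is, and inverting
`Σ^a`, `Σ^b` recovers `γ` and `β^b γ`.
-/

section Covariance

variable {Ω : Type*} [MeasurableSpace Ω] {μ : Measure Ω}

lemma cov_eq_covariance (X Y : Ω → ℝ) : cov μ X Y = cov[X, Y; μ] := rfl

lemma cov_add_right_of_indepFun [IsFiniteMeasure μ] {Z X W : Ω → ℝ}
    (hZ : MemLp Z 2 μ) (hX : MemLp X 2 μ) (hW : MemLp W 2 μ) (hZW : IndepFun Z W μ) :
    cov μ Z (fun ω => X ω + W ω) = cov μ Z X := by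
  simp only [cov_eq_covariance]
  rw [← Pi.add_def, covariance_add_right hZ hX hW, hZW.covariance_eq_zero hZ hW, add_zero]

lemma cov_const_mul_right (Z X : Ω → ℝ) (c : ℝ) :
    cov μ Z (fun ω => c * X ω) = c * cov μ Z X :=
  covariance_const_mul_right c

lemma cov_sum_const_mul_right [IsFiniteMeasure μ] {ι : Type*} [Fintype ι] (c : ι → ℝ)
    {Z : Ω → ℝ} {z : ι → Ω → ℝ} (hZ : MemLp Z 2 μ) (hz : ∀ k, MemLp (z k) 2 μ) :
    cov μ Z (fun ω => ∑ k, c k * z k ω) = ∑ k, c k * cov μ Z (z k) := by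
  simp only [cov_eq_covariance]
  rw [covariance_fun_sum_right (fun k => (hz k).const_mul (c k)) hZ]
  simp only [covariance_const_mul_right]

end Covariance

lemma of_mulVec_apply {ι α : Type*} [Fintype ι] [CommSemiring α] (S : ι → ι → α) (c : ι → α)
    (j : ι) :
    (Matrix.of S *ᵥ c) j = ∑ k, c k * S j k := by
  simp only [mulVec, dotProduct, of_apply, mul_comm]

theorem population_identification_linear_tsiv_general
    (q : ℕ) (γ : Fin q → ℝ)
    -- sample a
    {Ωa : Type*} [MeasurableSpace Ωa] (μa : Measure Ωa) [IsProbabilityMeasure μa]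
    (za : Fin q → Ωa → ℝ) (va : Ωa → ℝ)
    (hza2 : ∀ j, MemLp (za j) 2 μa) (hva2 : MemLp va 2 μa)
    (hindepa : IndepFun (fun ω (j : Fin q) => za j ω) va μa)
    (xa : Ωa → ℝ) (hxa : xa = fun ω => (∑ k, γ k * za k ω) + va ω)
    -- sample b
    {Ωb : Type*} [MeasurableSpace Ωb] (μb : Measure Ωb) [IsProbabilityMeasure μb]
    (zb : Fin q → Ωb → ℝ) (ub vb : Ωb → ℝ)
    (hzb2 : ∀ j, MemLp (zb j) 2 μb) (hub2 : MemLp ub 2 μb) (hvb2 : MemLp vb 2 μb)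
    (hindepb : IndepFun (fun ω (j : Fin q) => zb j ω) (fun ω => (ub ω, vb ω)) μb)
    (βb : ℝ)
    (xb : Ωb → ℝ) (hxb : xb = fun ω => (∑ k, γ k * zb k ω) + vb ω)
    (yb : Ωb → ℝ) (hyb : yb = fun ω => βb * xb ω + ub ω)
    -- instrument covariance matrices
    (Sa : Matrix (Fin q) (Fin q) ℝ) (hSa : Sa = Matrix.of fun j k => cov μa (za j) (za k))
    (Sb : Matrix (Fin q) (Fin q) ℝ) (hSb : Sb = Matrix.of fun j k => cov μb (zb j) (zb k))
    -- population moment function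
    (m : ℝ → Fin q → ℝ)
    (hm : ∀ β, m β = Sb⁻¹.mulVec (fun j => cov μb (zb j) yb) -
      β • Sa⁻¹.mulVec (fun j => cov μa (za j) xa)) :
    (∀ j, cov μa (za j) xa = ∑ k, γ k * cov μa (za j) (za k)) ∧
    (∀ j, cov μb (zb j) yb = βb * ∑ k, γ k * cov μb (zb j) (zb k)) ∧
    (IsUnit Sa.det → IsUnit Sb.det →
      Sb⁻¹.mulVec (fun j => cov μb (zb j) yb) = βb • γ ∧
      Sa⁻¹.mulVec (fun j => cov μa (za j) xa) = γ ∧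
      (∀ β, m β = (βb - β) • γ) ∧
      (γ ≠ 0 → ∀ β, m β = 0 ↔ β = βb)) := by
  have hsum_b : MemLp (fun ω => ∑ k, γ k * zb k ω) 2 μb :=
    memLp_finsetSum _ fun k _ => (hzb2 k).const_mul (γ k)
  have hxb2 : MemLp xb 2 μb := hxb ▸ (hsum_b.add hvb2 : MemLp (fun ω => _ + vb ω) 2 μb)
  have hcov_a : ∀ j, cov μa (za j) xa = ∑ k, γ k * cov μa (za j) (za k) := fun j => by
    rw [hxa, cov_add_right_of_indepFun (hza2 j)
      (memLp_finsetSum _ fun k _ => (hza2 k).const_mul (γ k)) hva2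
      (hindepa.comp (measurable_pi_apply j) measurable_id),
      cov_sum_const_mul_right γ (hza2 j) hza2]
  have hcov_b : ∀ j, cov μb (zb j) yb = βb * ∑ k, γ k * cov μb (zb j) (zb k) := fun j => by
    rw [hyb, cov_add_right_of_indepFun (hzb2 j) (hxb2.const_mul βb) hub2
      (hindepb.comp (measurable_pi_apply j) measurable_fst), cov_const_mul_right, hxb,
      cov_add_right_of_indepFun (hzb2 j) hsum_b hvb2
        (hindepb.comp (measurable_pi_apply j) measurable_snd),
      cov_sum_const_mul_right γ (hzb2 j) hzb2]
  refine ⟨hcov_a, hcov_b, fun hda hdb => ?_⟩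
  have := Sa.invertibleOfIsUnitDet hda
  have := Sb.invertibleOfIsUnitDet hdb
  have hγa : Sa⁻¹ *ᵥ (fun j => cov μa (za j) xa) = γ :=
    inv_mulVec_eq_vec <| funext fun j => by rw [hcov_a, hSa, of_mulVec_apply]
  have hγb : Sb⁻¹ *ᵥ (fun j => cov μb (zb j) yb) = βb • γ :=
    inv_mulVec_eq_vec <| funext fun j => by
      rw [hcov_b, hSb, mulVec_smul, Pi.smul_apply, of_mulVec_apply, smul_eq_mul]
  have hm_eq : ∀ β, m β = (βb - β) • γ := fun β => by rw [hm, hγa, hγb, sub_smul]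
  refine ⟨hγb, hγa, hm_eq, fun hγ β => ?_⟩
  rw [hm_eq, smul_eq_zero, or_iff_left hγ, sub_eq_zero, eq_comm]

/-- Population identification in the linear two-sample IV model
(Proposition 1): the population moment function `m(β)` equals `γ(β^b − β)`,
which (for `γ ≠ 0`) vanishes iff `β = β^b`. -/
theorem population_identification_linear_tsiv
    (q : ℕ) (hq : 1 ≤ q) (γ : Fin q → ℝ)
    -- sample a
    {Ωa : Type*} [MeasurableSpace Ωa] (μa : Measure Ωa) [IsProbabilityMeasure μa]
    (za : Fin q → Ωa → ℝ) (va : Ωa → ℝ)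
    (hza2 : ∀ j, MemLp (za j) 2 μa) (hva2 : MemLp va 2 μa)
    (hindepa : IndepFun (fun ω (j : Fin q) => za j ω) va μa)
    (xa : Ωa → ℝ) (hxa : xa = fun ω => (∑ k, γ k * za k ω) + va ω)
    -- sample b
    {Ωb : Type*} [MeasurableSpace Ωb] (μb : Measure Ωb) [IsProbabilityMeasure μb]
    (zb : Fin q → Ωb → ℝ) (ub vb : Ωb → ℝ)
    (hzb2 : ∀ j, MemLp (zb j) 2 μb) (hub2 : MemLp ub 2 μb) (hvb2 : MemLp vb 2 μb)
    (hindepb : IndepFun (fun ω (j : Fin q) => zb j ω) (fun ω => (ub ω, vb ω)) μb)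
    (βb : ℝ)
    (xb : Ωb → ℝ) (hxb : xb = fun ω => (∑ k, γ k * zb k ω) + vb ω)
    (yb : Ωb → ℝ) (hyb : yb = fun ω => βb * xb ω + ub ω)
    -- instrument covariance matrices
    (Sa : Matrix (Fin q) (Fin q) ℝ) (hSa : Sa = Matrix.of fun j k => cov μa (za j) (za k))
    (Sb : Matrix (Fin q) (Fin q) ℝ) (hSb : Sb = Matrix.of fun j k => cov μb (zb j) (zb k))
    -- population moment function
    (m : ℝ → Fin q → ℝ)
    (hm : ∀ β, m β = Sb⁻¹.mulVec (fun j => cov μb (zb j) yb) -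
      β • Sa⁻¹.mulVec (fun j => cov μa (za j) xa)) :
    (∀ j, cov μa (za j) xa = ∑ k, γ k * cov μa (za j) (za k)) ∧
    (∀ j, cov μb (zb j) yb = βb * ∑ k, γ k * cov μb (zb j) (zb k)) ∧
    (IsUnit Sa.det → IsUnit Sb.det →
      Sb⁻¹.mulVec (fun j => cov μb (zb j) yb) = βb • γ ∧
      Sa⁻¹.mulVec (fun j => cov μa (za j) xa) = γ ∧
      (∀ β, m β = (βb - β) • γ) ∧
      (γ ≠ 0 → ∀ β, m β = 0 ↔ β = βb)) :=
  population_identification_linear_tsiv_general q γ μa za va hza2 hva2 hindepa xa hxa μb zb ub vb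
    hzb2 hub2 hvb2 hindepb βb xb hxb yb hyb Sa hSa Sb hSb m hm
end

section
/- Consider two binary-IV setups: sample a with data (z^a, v^a, u^a, f^a, g^a) on one probability space and sample b with data (z^b, v^b, u^b, f^b, g^b) on another probability space, each satisfying the binary-IV assumptions including monotonicity, with P(z^a = 1), P(z^a = 0), P(z^b = 1), P(z^b = 0) all positive. Let C^a = {f^a(0, v^a) = 0 and f^a(1, v^a) = 1} and C^b = {f^b(0, v^b) = 0 and f^b(1, v^b) = 1}, and assume P(C^a) > 0. Then the two-sample Wald ratio β^{ab} := (E[y^b | z^b = 1] − E[y^b | z^b = 0])/(E[x^a | z^a = 1] − E[x^a | z^a = 0]) satisfies β^{ab} = E[g^b(1, u^b) − g^b(0, u^b)·1 | C^b] · P(C^b)/P(C^a) when P(C^b) > 0, i.e. β^{ab} = E[(g^b(1, u^b) − g^b(0, u^b))·1_{C^b}]/P(C^a). -/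
/-!
Within one sample, independence of the instrument gives
`E[y | z = b] = E[g(f(b, v), u)]` for each arm `b`, so the Wald numerator is
`E[g(f(1, v), u) - g(f(0, v), u)]`. By monotonicity the integrand vanishes off the compliers `C`,
where it equals `g(1, u) - g(0, u)`. Applied to the exposure itself (`g(b, u) = b`) this gives
`P(C)` as the Wald denominator, so the two-sample ratio is the sample-`b` complier effect
integral divided by `P(C^a)`.
-/

open MeasureTheory ProbabilityTheory

noncomputable def cexp {Ωs : Type*} [MeasurableSpace Ωs] (μ : Measure Ωs)
    (Y : Ωs → ℝ) (E : Set Ωs) : ℝ :=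
  (∫ ω in E, Y ω ∂μ) / (μ E).toReal

theorem Bool.sub_eq_ite_of_imp {G : Type*} [AddGroup G] (h : Bool → G) {a₀ a₁ : Bool}
    (hmono : a₀ = true → a₁ = true) :
    h a₁ - h a₀ = if a₀ = false ∧ a₁ = true then h true - h false else 0 := by
  cases a₀ <;> cases a₁ <;> simp_all

section

variable {Ω : Type*} [MeasurableSpace Ω] {μ : Measure Ω}

theorem integrable_select_of_forall_integrable {E : Type*} [NormedAddCommGroup E]
    {c : Ω → Bool} (hc : Measurable c) {F : Bool → Ω → E} (hF : ∀ b, Integrable (F b) μ) :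
    Integrable (fun ω => F (c ω) ω) μ := by
  have hs : MeasurableSet {ω | c ω = true} := hc (measurableSet_singleton true)
  have hsel : (fun ω => F (c ω) ω) = {ω | c ω = true}.piecewise (F true) (F false) := by
    ext ω
    cases h : c ω <;> simp [Set.piecewise, h]
  rw [hsel]
  exact Integrable.piecewise hs (hF true).integrableOn (hF false).integrableOn

theorem ProbabilityTheory.IndepFun.setIntegral_preimage {β : Type*} [MeasurableSpace β]
    {z : Ω → β} {W : Ω → ℝ}
    (hind : IndepFun z W μ) (hz : Measurable z) (hW : AEStronglyMeasurable W μ)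
    {s : Set β} (hs : MeasurableSet s) :
    ∫ ω in z ⁻¹' s, W ω ∂μ = μ.real (z ⁻¹' s) * ∫ ω, W ω ∂μ := by
  have hprod := hind.integral_fun_comp_mul_comp (f := s.indicator 1) (g := id)
    hz.aemeasurable hW.aemeasurable
    (stronglyMeasurable_one.indicator hs).aestronglyMeasurable aestronglyMeasurable_id
  have hindicator : ∀ ω, s.indicator (1 : β → ℝ) (z ω) = (z ⁻¹' s).indicator 1 ω := fun _ => rfl
  simp only [id, hindicator, integral_indicator_one (hz hs)] at hprod
  rw [← hprod, ← integral_indicator (hz hs)]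
  congr 1 with ω
  by_cases h : ω ∈ z ⁻¹' s <;> simp [h]

theorem ProbabilityTheory.IndepFun.cexp_preimage [IsFiniteMeasure μ] {β : Type*}
    [MeasurableSpace β] {z : Ω → β} {W : Ω → ℝ} (hind : IndepFun z W μ) (hz : Measurable z)
    (hW : AEStronglyMeasurable W μ) {s : Set β} (hs : MeasurableSet s) (hpos : μ (z ⁻¹' s) ≠ 0) :
    cexp μ W (z ⁻¹' s) = ∫ ω, W ω ∂μ := by
  rw [cexp, hind.setIntegral_preimage hz hW hs, measureReal_def,
    mul_div_cancel_left₀ _ (ENNReal.toReal_ne_zero.2 ⟨hpos, measure_ne_top μ _⟩)]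

variable {V U : Type*} [MeasurableSpace V]
  {z : Ω → Bool} {v : Ω → V} {u : Ω → U} {f : Bool → V → Bool} {g : Bool → U → ℝ}

theorem integral_sub_eq_setIntegral_compliers (hv : Measurable v) (hf : ∀ b, Measurable (f b))
    (hgint : ∀ b, Integrable (fun ω => g b (u ω)) μ)
    (hmono : ∀ w : V, f false w = true → f true w = true) :
    ∫ ω, g (f true (v ω)) (u ω) ∂μ - ∫ ω, g (f false (v ω)) (u ω) ∂μ =
      ∫ ω in {ω | f false (v ω) = false ∧ f true (v ω) = true},
        (g true (u ω) - g false (u ω)) ∂μ := by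
  have hC : MeasurableSet {ω | f false (v ω) = false ∧ f true (v ω) = true} :=
    ((hf false).comp hv (measurableSet_singleton false)).inter
      ((hf true).comp hv (measurableSet_singleton true))
  have hint : ∀ b, Integrable (fun ω => g (f b (v ω)) (u ω)) μ := fun b =>
    integrable_select_of_forall_integrable ((hf b).comp hv) hgint
  rw [← integral_sub (hint true) (hint false), ← integral_indicator hC]
  congr 1 with ω
  rw [Bool.sub_eq_ite_of_imp (fun b => g b (u ω)) (hmono (v ω))]
  simp only [Set.indicator_apply, Set.mem_ofPred_eq]

variable [MeasurableSpace U]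

theorem cexp_arm_eq_integral [IsFiniteMeasure μ] (hz : Measurable z) (hv : Measurable v)
    (hu : Measurable u) (hf : ∀ b, Measurable (f b)) (hg : ∀ b, Measurable (g b))
    (hindep : IndepFun z (fun ω => (u ω, v ω)) μ) {b : Bool} (hb : μ {ω | z ω = b} ≠ 0) :
    cexp μ (fun ω => g (f (z ω) (v ω)) (u ω)) {ω | z ω = b} = ∫ ω, g (f b (v ω)) (u ω) ∂μ := by
  have hψ : Measurable fun p : U × V => g (f b p.2) p.1 :=
    (measurable_from_prod_countable_right (f := Function.uncurry g) hg).comp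
      (((hf b).comp measurable_snd).prodMk measurable_fst)
  have hset : MeasurableSet {ω | z ω = b} := hz (measurableSet_singleton b)
  calc cexp μ (fun ω => g (f (z ω) (v ω)) (u ω)) {ω | z ω = b}
      = cexp μ (fun ω => g (f b (v ω)) (u ω)) (z ⁻¹' {b}) := by
        unfold cexp
        rw [setIntegral_congr_fun hset fun ω (hω : z ω = b) => by rw [hω]]
        rfl
    _ = ∫ ω, g (f b (v ω)) (u ω) ∂μ :=
        (hindep.comp measurable_id hψ).cexp_preimage hz
          (hψ.comp (hu.prodMk hv)).aestronglyMeasurable (measurableSet_singleton b) hb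

theorem cexp_sub_cexp_eq_setIntegral_compliers [IsFiniteMeasure μ] (hz : Measurable z)
    (hv : Measurable v) (hu : Measurable u) (hf : ∀ b, Measurable (f b))
    (hg : ∀ b, Measurable (g b)) (hgint : ∀ b, Integrable (fun ω => g b (u ω)) μ)
    (hindep : IndepFun z (fun ω => (u ω, v ω)) μ)
    (hmono : ∀ w : V, f false w = true → f true w = true)
    (hz1 : μ {ω | z ω = true} ≠ 0) (hz0 : μ {ω | z ω = false} ≠ 0) :
    cexp μ (fun ω => g (f (z ω) (v ω)) (u ω)) {ω | z ω = true} -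
        cexp μ (fun ω => g (f (z ω) (v ω)) (u ω)) {ω | z ω = false} =
      ∫ ω in {ω | f false (v ω) = false ∧ f true (v ω) = true},
        (g true (u ω) - g false (u ω)) ∂μ := by
  rw [cexp_arm_eq_integral hz hv hu hf hg hindep hz1,
    cexp_arm_eq_integral hz hv hu hf hg hindep hz0]
  exact integral_sub_eq_setIntegral_compliers hv hf hgint hmono

end

theorem cexp_sub_cexp_exposure_eq_measureReal_compliers {Ω V : Type*} [MeasurableSpace Ω]
    [MeasurableSpace V] {μ : Measure Ω} [IsFiniteMeasure μ] {z : Ω → Bool} {v : Ω → V}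
    {f : Bool → V → Bool} (hz : Measurable z) (hv : Measurable v) (hf : ∀ b, Measurable (f b))
    (hindep : IndepFun z v μ) (hmono : ∀ w : V, f false w = true → f true w = true)
    (hz1 : μ {ω | z ω = true} ≠ 0) (hz0 : μ {ω | z ω = false} ≠ 0) :
    cexp μ (fun ω => if f (z ω) (v ω) then (1 : ℝ) else 0) {ω | z ω = true} -
        cexp μ (fun ω => if f (z ω) (v ω) then (1 : ℝ) else 0) {ω | z ω = false} =
      μ.real {ω | f false (v ω) = false ∧ f true (v ω) = true} := by
  have hindep' : IndepFun z (fun ω => ((), v ω)) μ :=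
    hindep.comp measurable_id (measurable_const.prodMk measurable_id)
  rw [cexp_sub_cexp_eq_setIntegral_compliers (g := fun b (_ : Unit) => if b then (1 : ℝ) else 0)
    hz hv measurable_const hf (fun _ => measurable_const) (fun _ => integrable_const _) hindep'
    hmono hz1 hz0]
  simp

theorem two_sample_wald_ratio_decomposition_general
    {Ωa Ωb V U : Type*} [MeasurableSpace Ωa] [MeasurableSpace Ωb]
    [MeasurableSpace V] [MeasurableSpace U]
    -- sample a
    (μa : Measure Ωa) [IsProbabilityMeasure μa]
    (za : Ωa → Bool) (hzameas : Measurable za)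
    (va : Ωa → V) (hvameas : Measurable va)
    (ua : Ωa → U)
    (fa : Bool → V → Bool) (hfameas : ∀ b, Measurable (fa b))
    (hindepa : IndepFun za (fun ω => (ua ω, va ω)) μa)
    (hmonoa : ∀ w : V, fa false w = true → fa true w = true)
    (hza1 : 0 < μa {ω | za ω = true}) (hza0 : 0 < μa {ω | za ω = false})
    (xa : Ωa → ℝ) (hxa : xa = fun ω => if fa (za ω) (va ω) then (1 : ℝ) else 0)
    (Ca : Set Ωa) (hCa : Ca = {ω | fa false (va ω) = false ∧ fa true (va ω) = true})
    -- sample b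
    (μb : Measure Ωb) [IsProbabilityMeasure μb]
    (zb : Ωb → Bool) (hzbmeas : Measurable zb)
    (vb : Ωb → V) (hvbmeas : Measurable vb)
    (ub : Ωb → U) (hubmeas : Measurable ub)
    (fb : Bool → V → Bool) (hfbmeas : ∀ b, Measurable (fb b))
    (gb : Bool → U → ℝ) (hgbmeas : ∀ b, Measurable (gb b))
    (hgbint : ∀ b, Integrable (fun ω => gb b (ub ω)) μb)
    (hindepb : IndepFun zb (fun ω => (ub ω, vb ω)) μb)
    (hmonob : ∀ w : V, fb false w = true → fb true w = true)
    (hzb1 : 0 < μb {ω | zb ω = true}) (hzb0 : 0 < μb {ω | zb ω = false})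
    (yb : Ωb → ℝ) (hyb : yb = fun ω => gb (fb (zb ω) (vb ω)) (ub ω))
    (Cb : Set Ωb) (hCb : Cb = {ω | fb false (vb ω) = false ∧ fb true (vb ω) = true})
    -- two-sample Wald ratio
    (βab : ℝ)
    (hβab : βab = (cexp μb yb {ω | zb ω = true} - cexp μb yb {ω | zb ω = false}) /
      (cexp μa xa {ω | za ω = true} - cexp μa xa {ω | za ω = false})) :
    (0 < μb Cb →
      βab = cexp μb (fun ω => gb true (ub ω) - gb false (ub ω)) Cb *
        ((μb Cb).toReal / (μa Ca).toReal)) ∧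
    βab = (∫ ω in Cb, (gb true (ub ω) - gb false (ub ω)) ∂μb) / (μa Ca).toReal := by
  subst hxa hyb hCa hCb hβab
  have hnum := cexp_sub_cexp_eq_setIntegral_compliers hzbmeas hvbmeas hubmeas hfbmeas hgbmeas
    hgbint hindepb hmonob hzb1.ne' hzb0.ne'
  have hden := cexp_sub_cexp_exposure_eq_measureReal_compliers hzameas hvameas hfameas
    (hindepa.comp measurable_id measurable_snd) hmonoa hza1.ne' hza0.ne'
  rw [hnum, hden, measureReal_def]
  refine ⟨fun hCb => ?_, rfl⟩
  have hCb' : (μb _).toReal ≠ 0 := ENNReal.toReal_ne_zero.2 ⟨hCb.ne', measure_ne_top μb _⟩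
  rw [cexp, div_mul_div_cancel₀ hCb']

/-- Two-sample Wald ratio decomposition: with binary-IV setups in
samples `a` and `b` (each with monotonicity), the two-sample Wald ratio
`β^{ab}` equals `E[g^b(1,u^b) − g^b(0,u^b) | C^b] · P(C^b)/P(C^a)` when
`P(C^b) > 0`, i.e. `β^{ab} = E[(g^b(1,u^b) − g^b(0,u^b))·1_{C^b}]/P(C^a)`. -/
theorem two_sample_wald_ratio_decomposition
    {Ωa Ωb V U : Type*} [MeasurableSpace Ωa] [MeasurableSpace Ωb]
    [MeasurableSpace V] [MeasurableSpace U]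
    -- sample a
    (μa : Measure Ωa) [IsProbabilityMeasure μa]
    (za : Ωa → Bool) (hzameas : Measurable za)
    (va : Ωa → V) (hvameas : Measurable va)
    (ua : Ωa → U) (huameas : Measurable ua)
    (fa : Bool → V → Bool) (hfameas : ∀ b, Measurable (fa b))
    (ga : Bool → U → ℝ) (hgameas : ∀ b, Measurable (ga b))
    (hgaint : ∀ b, Integrable (fun ω => ga b (ua ω)) μa)
    (hindepa : IndepFun za (fun ω => (ua ω, va ω)) μa)
    (hmonoa : ∀ w : V, fa false w = true → fa true w = true)
    (hza1 : 0 < μa {ω | za ω = true}) (hza0 : 0 < μa {ω | za ω = false})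
    (xa : Ωa → ℝ) (hxa : xa = fun ω => if fa (za ω) (va ω) then (1 : ℝ) else 0)
    (Ca : Set Ωa) (hCa : Ca = {ω | fa false (va ω) = false ∧ fa true (va ω) = true})
    (hCapos : 0 < μa Ca)
    -- sample b
    (μb : Measure Ωb) [IsProbabilityMeasure μb]
    (zb : Ωb → Bool) (hzbmeas : Measurable zb)
    (vb : Ωb → V) (hvbmeas : Measurable vb)
    (ub : Ωb → U) (hubmeas : Measurable ub)
    (fb : Bool → V → Bool) (hfbmeas : ∀ b, Measurable (fb b))
    (gb : Bool → U → ℝ) (hgbmeas : ∀ b, Measurable (gb b))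
    (hgbint : ∀ b, Integrable (fun ω => gb b (ub ω)) μb)
    (hindepb : IndepFun zb (fun ω => (ub ω, vb ω)) μb)
    (hmonob : ∀ w : V, fb false w = true → fb true w = true)
    (hzb1 : 0 < μb {ω | zb ω = true}) (hzb0 : 0 < μb {ω | zb ω = false})
    (yb : Ωb → ℝ) (hyb : yb = fun ω => gb (fb (zb ω) (vb ω)) (ub ω))
    (Cb : Set Ωb) (hCb : Cb = {ω | fb false (vb ω) = false ∧ fb true (vb ω) = true})
    -- two-sample Wald ratio
    (βab : ℝ)
    (hβab : βab = (cexp μb yb {ω | zb ω = true} - cexp μb yb {ω | zb ω = false}) /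
      (cexp μa xa {ω | za ω = true} - cexp μa xa {ω | za ω = false})) :
    (0 < μb Cb →
      βab = cexp μb (fun ω => gb true (ub ω) - gb false (ub ω)) Cb *
        ((μb Cb).toReal / (μa Ca).toReal)) ∧
    βab = (∫ ω in Cb, (gb true (ub ω) - gb false (ub ω)) ∂μb) / (μa Ca).toReal :=
  two_sample_wald_ratio_decomposition_general μa za hzameas va hvameas ua fa hfameas hindepa hmonoa
    hza1 hza0 xa hxa Ca hCa μb zb hzbmeas vb hvbmeas ub hubmeas fb hfbmeas gb hgbmeas hgbint hindepb
    hmonob hzb1 hzb0 yb hyb Cb hCb βab hβab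
end
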